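/- arXiv:1212.0115 — 3 statements merged into one kernel-verified Lean document; each statement's English description precedes it below -/
import Mathlib

section
/- Let G ⊊ ℝⁿ be a domain (nonempty open connected proper subset), let w ∈ G, and let w₀ ∈ ∂G be a boundary point with |w − w₀| = δ_G(w). If s ∈ (0,1) and x, y lie in Bⁿ(w, s·δ_G(w)) ∩ [w, w₀] (the intersection of the open ball of radius s·δ_G(w) centered at w with the segment from w to w₀), then k_G(x,y) ≤ (1+s)·j_G(x,y). -/
open Set Metric

/-- The Euclidean distance from a point to the boundary of `G`. -/
noncomputable def bdist {n : ℕ} (G : Set (EuclideanSpace ℝ (Fin n)))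
    (x : EuclideanSpace ℝ (Fin n)) : ℝ :=
  Metric.infDist x (frontier G)

/-- The quasihyperbolic length of a path `γ` (parametrized on `[0,1]`) in `G`. -/
noncomputable def qhLength {n : ℕ} (G : Set (EuclideanSpace ℝ (Fin n)))
    (γ : ℝ → EuclideanSpace ℝ (Fin n)) : ℝ :=
  ∫ t in (0:ℝ)..1, ‖deriv γ t‖ / bdist G (γ t)

/-- The quasihyperbolic metric of `G`: the infimum of quasihyperbolic lengths of
paths joining `x` and `y` inside `G`. -/
noncomputable def qhDist {n : ℕ} (G : Set (EuclideanSpace ℝ (Fin n)))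
    (x y : EuclideanSpace ℝ (Fin n)) : ℝ :=
  ⨅ γ : {γ : ℝ → EuclideanSpace ℝ (Fin n) // γ 0 = x ∧ γ 1 = y ∧
      (∀ t ∈ Set.Icc (0:ℝ) 1, γ t ∈ G) ∧ ContDiffOn ℝ 1 γ (Set.Icc 0 1)},
    qhLength G γ.1

/-- The distance ratio metric of `G`. -/
noncomputable def jDist {n : ℕ} (G : Set (EuclideanSpace ℝ (Fin n)))
    (x y : EuclideanSpace ℝ (Fin n)) : ℝ :=
  Real.log (1 + dist x y / min (bdist G x) (bdist G y))

/-! On the segment from `w` to a nearest boundary point `w₀` the boundary distance decreases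
linearly, `δ_G(lineMap w w₀ t) = (1 - t) δ_G(w)`. Integrating `|dz| / δ_G(z)` along the straight
path between two points `lineMap w w₀ a`, `lineMap w w₀ b` of the segment then gives exactly
`log (1 + |b - a| / (1 - max a b)) = j_G(x, y)`, so even `k_G(x, y) ≤ j_G(x, y)` holds. The condition
`s < 1` keeps the path inside `B(w, δ_G(w))`, which lies in `G` because a ball meeting `G` but not
`∂G` is contained in `G`. -/

open AffineMap

theorem IsPreconnected.subset_of_disjoint_frontier {X : Type*} [TopologicalSpace X]
    {s t : Set X} (hs : IsPreconnected s) (hst : (s ∩ t).Nonempty)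
    (hd : Disjoint s (frontier t)) : s ⊆ t := by
  have hcover : s ⊆ interior t ∪ interior tᶜ := fun p hp => by
    have hpf : p ∉ frontier t := hd.notMem_of_mem_left hp
    rw [frontier, mem_sdiff, not_and_not_right] at hpf
    rw [interior_compl]
    by_cases hpc : p ∈ closure t
    · exact Or.inl (hpf hpc)
    · exact Or.inr hpc
  have hint : (s ∩ interior t).Nonempty := by
    obtain ⟨p, hps, hpt⟩ := hst
    exact ⟨p, hps, (hcover hps).resolve_right
      (by rw [interior_compl]; exact not_not.2 (subset_closure hpt))⟩
  have hdisj : Disjoint (interior t) (interior tᶜ) :=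
    disjoint_compl_right.mono interior_subset interior_subset
  exact (hs.subset_left_of_subset_union isOpen_interior isOpen_interior hdisj hcover hint).trans
    interior_subset

section NormedSpace

variable {E : Type*} [NormedAddCommGroup E] [NormedSpace ℝ E]

theorem Metric.ball_infDist_frontier_subset {G : Set E} {w : E} (hw : w ∈ G) :
    ball w (infDist w (frontier G)) ⊆ G := fun _ hz =>
  (convex_ball w _).isPreconnected.subset_of_disjoint_frontier
    ⟨w, mem_ball_self (dist_nonneg.trans_lt hz), hw⟩
    disjoint_ball_infDist hz

theorem Metric.infDist_lineMap_of_dist_eq_infDist {S : Set E} {w w₀ : E} (hw₀ : w₀ ∈ S)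
    (hd : dist w w₀ = infDist w S) {t : ℝ} (ht : t ∈ Icc (0 : ℝ) 1) :
    infDist (lineMap w w₀ t) S = (1 - t) * infDist w S := by
  have hleft : dist (lineMap w w₀ t) w = t * infDist w S := by
    rw [dist_lineMap_left, Real.norm_of_nonneg ht.1, hd]
  have hright : dist (lineMap w w₀ t) w₀ = (1 - t) * infDist w S := by
    rw [dist_lineMap_right, Real.norm_of_nonneg (sub_nonneg.2 ht.2), hd]
  refine le_antisymm (hright ▸ infDist_le_dist_of_mem hw₀) ?_
  have := infDist_le_infDist_add_dist (x := w) (y := lineMap w w₀ t) (s := S)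
  rw [dist_comm, hleft] at this
  linarith

theorem lineMap_lineMap_lineMap {V : Type*} [AddCommGroup V] [Module ℝ V] (p q : V) (a b t : ℝ) :
    lineMap (lineMap p q a) (lineMap p q b) t = lineMap p q (lineMap a b t) := by
  simp only [lineMap_apply_module]
  module

theorem lt_of_lineMap_mem_ball {w w₀ : E} {r t : ℝ} (ht : 0 ≤ t)
    (h : lineMap w w₀ t ∈ ball w (r * dist w w₀)) : t < r := by
  rw [mem_ball, dist_lineMap_left, Real.norm_of_nonneg ht] at h
  exact lt_of_mul_lt_mul_right h dist_nonneg

end NormedSpace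

theorem integral_div_one_sub_lineMap {a b : ℝ} (hab : a ≤ b) (hb : b < 1) :
    ∫ t in (0 : ℝ)..1, (b - a) / (1 - lineMap a b t) = Real.log ((1 - a) / (1 - b)) := by
  have hpos : ∀ t ∈ uIcc (0 : ℝ) 1, 0 < 1 - lineMap a b t := fun t ht => by
    rw [uIcc_of_le zero_le_one] at ht
    have : lineMap a b t ≤ b := by
      rw [lineMap_apply_ring']; nlinarith [ht.2]
    linarith
  have hderiv : ∀ t ∈ uIcc (0 : ℝ) 1, HasDerivAt (fun t => -Real.log (1 - lineMap a b t))
      ((b - a) / (1 - lineMap a b t)) t := fun t ht => by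
    have h := ((hasDerivAt_lineMap (a := a) (b := b) (x := t)).const_sub 1).log (hpos t ht).ne'
    rw [show (b - a) / (1 - lineMap a b t) = -(-(b - a) / (1 - lineMap a b t)) by ring]
    exact h.neg
  have hcont : ContinuousOn (fun t => (b - a) / (1 - lineMap a b t)) (uIcc (0 : ℝ) 1) :=
    continuousOn_const.div (continuousOn_const.sub lineMap_continuous.continuousOn)
      fun t ht => (hpos t ht).ne'
  rw [intervalIntegral.integral_eq_sub_of_hasDerivAt hderiv hcont.intervalIntegrable,
    lineMap_apply_zero, lineMap_apply_one, Real.log_div (by linarith) (by linarith)]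
  ring

theorem integral_abs_div_one_sub_lineMap {a b : ℝ} (ha : a < 1) (hb : b < 1) :
    ∫ t in (0 : ℝ)..1, |b - a| / (1 - lineMap a b t) =
      Real.log (1 + |b - a| / (1 - max a b)) := by
  wlog hab : a ≤ b generalizing a b
  · have hsymm := this hb ha (le_of_not_ge hab)
    have hflip := intervalIntegral.integral_comp_sub_left
      (fun t => |a - b| / (1 - lineMap b a t)) (a := 0) (b := 1) 1
    simp only [lineMap_apply_one_sub, sub_self, sub_zero] at hflip
    rw [abs_sub_comm, max_comm, hflip, hsymm]
  rw [abs_of_nonneg (sub_nonneg.2 hab), max_eq_right hab, integral_div_one_sub_lineMap hab hb]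
  congr 1
  field_simp [(sub_pos.2 hb).ne']
  ring

section Quasihyperbolic

variable {n : ℕ} {G : Set (EuclideanSpace ℝ (Fin n))}

theorem jDist_nonneg (G : Set (EuclideanSpace ℝ (Fin n))) (x y : EuclideanSpace ℝ (Fin n)) :
    0 ≤ jDist G x y := by
  unfold jDist bdist
  exact Real.log_nonneg (le_add_of_nonneg_right
    (div_nonneg dist_nonneg (le_min infDist_nonneg infDist_nonneg)))

theorem qhDist_le_qhLength {x y : EuclideanSpace ℝ (Fin n)} {γ : ℝ → EuclideanSpace ℝ (Fin n)}
    (hγ₀ : γ 0 = x) (hγ₁ : γ 1 = y) (hγG : ∀ t ∈ Icc (0 : ℝ) 1, γ t ∈ G)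
    (hγC : ContDiffOn ℝ 1 γ (Icc 0 1)) : qhDist G x y ≤ qhLength G γ := by
  unfold qhDist
  refine ciInf_le ⟨0, ?_⟩ (Subtype.mk γ ⟨hγ₀, hγ₁, hγG, hγC⟩)
  rintro _ ⟨γ', rfl⟩
  exact intervalIntegral.integral_nonneg zero_le_one
    fun t _ => div_nonneg (norm_nonneg _) infDist_nonneg

variable {w w₀ : EuclideanSpace ℝ (Fin n)}

theorem bdist_lineMap (hw₀ : w₀ ∈ frontier G) (hd : dist w w₀ = bdist G w) {t : ℝ}
    (ht : t ∈ Icc (0 : ℝ) 1) : bdist G (lineMap w w₀ t) = (1 - t) * bdist G w :=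
  infDist_lineMap_of_dist_eq_infDist hw₀ hd ht

theorem lineMap_mem_of_dist_eq_bdist (hw : w ∈ G) (hw₀ : w₀ ∈ frontier G)
    (hd : dist w w₀ = bdist G w) {t : ℝ} (ht : t ∈ Ico (0 : ℝ) 1) : lineMap w w₀ t ∈ G := by
  rcases eq_or_ne w w₀ with rfl | hne
  · simpa using hw
  refine ball_infDist_frontier_subset hw ?_
  rw [mem_ball, dist_lineMap_left, Real.norm_of_nonneg ht.1, ← bdist, ← hd]
  exact mul_lt_of_lt_one_left (dist_pos.2 hne) ht.2

theorem qhLength_lineMap_eq_jDist (hw₀ : w₀ ∈ frontier G) (hd : dist w w₀ = bdist G w)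
    (hne : w ≠ w₀) {a b : ℝ} (ha : a ∈ Ico (0 : ℝ) 1) (hb : b ∈ Ico (0 : ℝ) 1) :
    qhLength G (lineMap (lineMap w w₀ a) (lineMap w w₀ b)) =
      jDist G (lineMap w w₀ a) (lineMap w w₀ b) := by
  have hδ : 0 < bdist G w := hd ▸ dist_pos.2 hne
  have hmem : ∀ t ∈ Icc (0 : ℝ) 1, lineMap a b t ∈ Icc (0 : ℝ) 1 := fun t ht =>
    (convex_Icc (0 : ℝ) 1).lineMap_mem (Ico_subset_Icc_self ha) (Ico_subset_Icc_self hb) ht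
  have hmin : min (bdist G (lineMap w w₀ a)) (bdist G (lineMap w w₀ b)) =
      (1 - max a b) * bdist G w := by
    rw [bdist_lineMap hw₀ hd (Ico_subset_Icc_self ha), bdist_lineMap hw₀ hd (Ico_subset_Icc_self hb),
      ← min_mul_of_nonneg _ _ hδ.le, min_sub_sub_left]
  unfold qhLength jDist
  rw [hmin, dist_lineMap_lineMap, hd, Real.dist_eq, abs_sub_comm,
    mul_div_mul_right _ _ hδ.ne', ← integral_abs_div_one_sub_lineMap ha.2 hb.2]
  refine intervalIntegral.integral_congr fun t ht => ?_
  rw [uIcc_of_le zero_le_one] at ht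
  rw [hasDerivAt_lineMap.deriv, ← dist_eq_norm, dist_lineMap_lineMap, lineMap_lineMap_lineMap,
    bdist_lineMap hw₀ hd (hmem t ht), Real.dist_eq, hd, mul_div_mul_right _ _ hδ.ne']

theorem qhDist_lineMap_le_jDist (hw : w ∈ G) (hw₀ : w₀ ∈ frontier G)
    (hd : dist w w₀ = bdist G w) (hne : w ≠ w₀) {a b : ℝ} (ha : a ∈ Ico (0 : ℝ) 1)
    (hb : b ∈ Ico (0 : ℝ) 1) :
    qhDist G (lineMap w w₀ a) (lineMap w w₀ b) ≤ jDist G (lineMap w w₀ a) (lineMap w w₀ b) := by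
  have hpath : ∀ t ∈ Icc (0 : ℝ) 1, lineMap (lineMap w w₀ a) (lineMap w w₀ b) t ∈ G :=
    fun t ht => lineMap_lineMap_lineMap w w₀ a b t ▸
      lineMap_mem_of_dist_eq_bdist hw hw₀ hd ((convex_Ico (0 : ℝ) 1).lineMap_mem ha hb ht)
  exact (qhDist_le_qhLength (lineMap_apply_zero _ _) (lineMap_apply_one _ _) hpath
    (contDiff_lineMap _ _).contDiffOn).trans_eq (qhLength_lineMap_eq_jDist hw₀ hd hne ha hb)

end Quasihyperbolic

theorem stmt_4_general (n : ℕ) (G : Set (EuclideanSpace ℝ (Fin n)))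
    (w : EuclideanSpace ℝ (Fin n)) (hw : w ∈ G)
    (w₀ : EuclideanSpace ℝ (Fin n)) (hw₀ : w₀ ∈ frontier G)
    (hd : dist w w₀ = bdist G w)
    (s : ℝ) (hs : s ∈ Set.Ioo (0:ℝ) 1)
    (x y : EuclideanSpace ℝ (Fin n))
    (hx : x ∈ Metric.ball w (s * bdist G w) ∩ segment ℝ w w₀)
    (hy : y ∈ Metric.ball w (s * bdist G w) ∩ segment ℝ w w₀) :
    qhDist G x y ≤ (1 + s) * jDist G x y := by
  obtain ⟨hxw, hxs⟩ := hx
  obtain ⟨hyw, hys⟩ := hy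
  rw [segment_eq_image_lineMap] at hxs hys
  obtain ⟨a, ha, rfl⟩ := hxs
  obtain ⟨b, hb, rfl⟩ := hys
  rw [← hd] at hxw hyw
  have hne : w ≠ w₀ := dist_pos.1 (pos_of_mul_pos_right (dist_nonneg.trans_lt hxw) hs.1.le)
  have ha' : a ∈ Ico (0 : ℝ) 1 := ⟨ha.1, (lt_of_lineMap_mem_ball ha.1 hxw).trans hs.2⟩
  have hb' : b ∈ Ico (0 : ℝ) 1 := ⟨hb.1, (lt_of_lineMap_mem_ball hb.1 hyw).trans hs.2⟩
  calc qhDist G (lineMap w w₀ a) (lineMap w w₀ b)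
      ≤ jDist G (lineMap w w₀ a) (lineMap w w₀ b) := qhDist_lineMap_le_jDist hw hw₀ hd hne ha' hb'
    _ ≤ (1 + s) * jDist G (lineMap w w₀ a) (lineMap w w₀ b) :=
      le_mul_of_one_le_left (jDist_nonneg G _ _) (le_add_of_nonneg_right hs.1.le)

theorem stmt_4 (n : ℕ) (G : Set (EuclideanSpace ℝ (Fin n)))
    (hGo : IsOpen G) (hGc : IsConnected G) (hGp : G ≠ Set.univ)
    (w : EuclideanSpace ℝ (Fin n)) (hw : w ∈ G)
    (w₀ : EuclideanSpace ℝ (Fin n)) (hw₀ : w₀ ∈ frontier G)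
    (hd : dist w w₀ = bdist G w)
    (s : ℝ) (hs : s ∈ Set.Ioo (0:ℝ) 1)
    (x y : EuclideanSpace ℝ (Fin n))
    (hx : x ∈ Metric.ball w (s * bdist G w) ∩ segment ℝ w w₀)
    (hy : y ∈ Metric.ball w (s * bdist G w) ∩ segment ℝ w w₀) :
    qhDist G x y ≤ (1 + s) * jDist G x y :=
  stmt_4_general n G w hw w₀ hw₀ hd s hs x y hx hy
end

section
/- Let Bⁿ be the open unit ball in ℝⁿ (n ≥ 1). Then for all x, y ∈ Bⁿ, writing t = |x−y|, one has j_{Bⁿ}(x,y) ≥ log((2 + t)/(2 − t)) = 2·artanh(t/2) ≥ t. Equivalently, the identity map from (Bⁿ, j_{Bⁿ}) to (Bⁿ, |·|) has modulus of continuity ω(t) = 2·tanh(t/2), i.e., |x−y| ≤ 2·tanh(j_{Bⁿ}(x,y)/2). -/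
open Set Metric

/-- The inverse hyperbolic tangent. -/
noncomputable def artanh (x : ℝ) : ℝ := (1 / 2) * Real.log ((1 + x) / (1 - x))

/-!
For `x, y` in the unit ball with `t = |x - y|`, the triangle inequality gives
`t ≤ |x| + |y|`, so the smaller of the boundary distances `1 - |x|`, `1 - |y|` is at most
`(2 - t) / 2`; hence `1 + t / min(δ(x), δ(y)) ≥ 1 + 2t / (2 - t) = (2 + t) / (2 - t)`.
The remaining claims are properties of `artanh s = log √((1 + s) / (1 - s))` at `s = t / 2`:
its power series `s + s³/3 + ⋯` gives `artanh s ≥ s` for `s ≥ 0`, and since `artanh` inverts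
`tanh` monotonically, `2 artanh (t / 2) ≤ j` turns into `t ≤ 2 tanh (j / 2)`.
-/

lemma log_two_add_div_two_sub_eq_two_mul_artanh (t : ℝ) :
    Real.log ((2 + t) / (2 - t)) = 2 * artanh (t / 2) := by
  rw [artanh, show 1 + t / 2 = (2 + t) / 2 by ring, show 1 - t / 2 = (2 - t) / 2 by ring,
    div_div_div_cancel_right₀ two_ne_zero]
  ring

lemma artanh_eq_real_artanh {s : ℝ} (hs : s ∈ Icc (-1) 1) : artanh s = Real.artanh s :=
  (Real.artanh_eq_half_log hs).symm

lemma self_le_real_artanh {s : ℝ} (h0 : 0 ≤ s) (h1 : s < 1) : s ≤ Real.artanh s := by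
  have hseries := Real.hasSum_log_sub_log_of_abs_lt_one (abs_lt.2 ⟨by linarith, h1⟩)
  have hfirst : 2 * s ≤ Real.log (1 + s) - Real.log (1 - s) := by
    simpa using le_hasSum hseries 0 fun k _ => by positivity
  rw [Real.artanh_eq_half_log ⟨by linarith, h1.le⟩,
    Real.log_div (by linarith) (by linarith)]
  linarith

lemma le_tanh_of_real_artanh_le {s u : ℝ} (hs : s ∈ Ioo (-1) 1) (h : Real.artanh s ≤ u) :
    s ≤ Real.tanh u := by
  rwa [← Real.artanh_le_artanh_iff hs ⟨Real.neg_one_lt_tanh u, Real.tanh_lt_one u⟩,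
    Real.artanh_tanh]

lemma log_two_add_div_two_sub_le_log_one_add_div {t m : ℝ} (ht : 0 ≤ t) (hm : 0 < m)
    (htm : t + 2 * m ≤ 2) : Real.log ((2 + t) / (2 - t)) ≤ Real.log (1 + t / m) := by
  have h2t : 0 < 2 - t := by linarith
  apply Real.log_le_log (by positivity)
  rw [div_le_iff₀ h2t, one_add_div hm.ne', div_mul_eq_mul_div, le_div_iff₀ hm]
  nlinarith

lemma infDist_sphere_zero {E : Type*} [NormedAddCommGroup E] [NormedSpace ℝ E] [Nontrivial E]
    {x : E} {r : ℝ} (hx : ‖x‖ ≤ r) : infDist x (sphere 0 r) = r - ‖x‖ := by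
  have hne : (sphere (0 : E) r).Nonempty :=
    NormedSpace.sphere_nonempty.2 ((norm_nonneg x).trans hx)
  refine le_antisymm ?_ ((le_infDist hne).2 fun z hz => ?_)
  · rcases eq_or_ne x 0 with rfl | hx0
    · obtain ⟨z, hz⟩ := hne
      simpa [mem_sphere_zero_iff_norm.1 hz] using infDist_le_dist_of_mem (x := 0) hz
    · have hxpos : 0 < ‖x‖ := norm_pos_iff.2 hx0
      have hr : 0 ≤ r := hxpos.le.trans hx
      have hz : (r / ‖x‖) • x ∈ sphere (0 : E) r := by
        rw [mem_sphere_zero_iff_norm, norm_smul, Real.norm_of_nonneg (by positivity),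
          div_mul_cancel₀ _ hxpos.ne']
      refine (infDist_le_dist_of_mem hz).trans_eq ?_
      rw [dist_eq_norm, show x - (r / ‖x‖) • x = (1 - r / ‖x‖) • x by rw [sub_smul, one_smul],
        norm_smul, Real.norm_eq_abs,
        abs_of_nonpos (by rw [sub_nonpos, one_le_div hxpos]; exact hx)]
      field_simp
      ring
  · rw [mem_sphere_zero_iff_norm] at hz
    rw [dist_comm, dist_eq_norm, ← hz]
    exact norm_sub_norm_le z x

lemma bdist_ball_zero {n : ℕ} [Nontrivial (EuclideanSpace ℝ (Fin n))] {r : ℝ}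
    {x : EuclideanSpace ℝ (Fin n)} (hx : x ∈ ball 0 r) : bdist (ball 0 r) x = r - ‖x‖ := by
  rw [mem_ball_zero_iff] at hx
  rw [bdist, frontier_ball 0 ((norm_nonneg x).trans_lt hx).ne', infDist_sphere_zero hx.le]

lemma log_two_add_div_two_sub_le_jDist {n : ℕ} {x y : EuclideanSpace ℝ (Fin n)}
    (hx : x ∈ ball 0 1) (hy : y ∈ ball 0 1) :
    Real.log ((2 + dist x y) / (2 - dist x y)) ≤ jDist (ball 0 1) x y := by
  rcases eq_or_ne x y with rfl | hxy
  · simp [jDist]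
  have := nontrivial_of_ne x y hxy
  rw [jDist, bdist_ball_zero hx, bdist_ball_zero hy]
  rw [mem_ball_zero_iff] at hx hy
  refine log_two_add_div_two_sub_le_log_one_add_div dist_nonneg
    (lt_min (by linarith) (by linarith)) ?_
  have := dist_le_norm_add_norm x y
  have := min_le_left (1 - ‖x‖) (1 - ‖y‖)
  have := min_le_right (1 - ‖x‖) (1 - ‖y‖)
  linarith

theorem stmt_10_general (n : ℕ) (x y : EuclideanSpace ℝ (Fin n))
    (hx : x ∈ Metric.ball (0 : EuclideanSpace ℝ (Fin n)) 1)
    (hy : y ∈ Metric.ball (0 : EuclideanSpace ℝ (Fin n)) 1) :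
    Real.log ((2 + dist x y) / (2 - dist x y)) ≤
      jDist (Metric.ball (0 : EuclideanSpace ℝ (Fin n)) 1) x y ∧
    Real.log ((2 + dist x y) / (2 - dist x y)) = 2 * artanh (dist x y / 2) ∧
    dist x y ≤ Real.log ((2 + dist x y) / (2 - dist x y)) ∧
    dist x y ≤ 2 * Real.tanh
      (jDist (Metric.ball (0 : EuclideanSpace ℝ (Fin n)) 1) x y / 2) := by
  set t := dist x y
  have ht0 : 0 ≤ t := dist_nonneg
  have ht2 : t < 2 := by
    have := dist_le_norm_add_norm x y
    rw [mem_ball_zero_iff] at hx hy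
    linarith
  have hj := log_two_add_div_two_sub_le_jDist hx hy
  have hlog := log_two_add_div_two_sub_eq_two_mul_artanh t
  rw [artanh_eq_real_artanh ⟨by linarith, by linarith⟩] at hlog
  refine ⟨hj, log_two_add_div_two_sub_eq_two_mul_artanh t, ?_, ?_⟩
  · linarith [self_le_real_artanh (s := t / 2) (by linarith) (by linarith)]
  · linarith [le_tanh_of_real_artanh_le (s := t / 2) (u := jDist (ball 0 1) x y / 2)
      ⟨by linarith, by linarith⟩ (by linarith)]

theorem stmt_10 (n : ℕ) (hn : 1 ≤ n) (x y : EuclideanSpace ℝ (Fin n))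
    (hx : x ∈ Metric.ball (0 : EuclideanSpace ℝ (Fin n)) 1)
    (hy : y ∈ Metric.ball (0 : EuclideanSpace ℝ (Fin n)) 1) :
    Real.log ((2 + dist x y) / (2 - dist x y)) ≤
      jDist (Metric.ball (0 : EuclideanSpace ℝ (Fin n)) 1) x y ∧
    Real.log ((2 + dist x y) / (2 - dist x y)) = 2 * artanh (dist x y / 2) ∧
    dist x y ≤ Real.log ((2 + dist x y) / (2 - dist x y)) ∧
    dist x y ≤ 2 * Real.tanh
      (jDist (Metric.ball (0 : EuclideanSpace ℝ (Fin n)) 1) x y / 2) :=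
  stmt_10_general n x y hx hy
end

section
/- Let 0 < s < 1, let G₁ = {(x,y) ∈ ℝ² : |x|^s + |y|^s < 1} and G₂ = {(x,y) ∈ ℝ² : |x| + |y| < 1}, so that G₁ ⊂ G₂. Then for all z₁, z₂ ∈ G₁, k_{G₁}(z₁, z₂) ≥ 2^{1/s − 1} · k_{G₂}(z₁, z₂). -/
open Set Metric

/-! A path in `G₁ = lpUnitBall s` is also a path in `G₂ = lpUnitBall 1`, and its two
quasihyperbolic lengths compare pointwise, so it suffices to show
`2^(1/s - 1) δ_{G₁}(z) ≤ δ_{G₂}(z)`. With `a = |z₀|`, `b = |z₁|` one has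
`δ_{G₂}(z) ≥ (1 - a - b)/√2`, while moving `z` away from both axes by `u`, where
`(a + u)^s + (b + u)^s = 1`, reaches `∂G₁` at distance `√2 u`. Convexity of `t ↦ t^(1/s)`
gives `a + b + 2^(1/s) u ≤ 1`, which is the required inequality. -/

open Real Topology

lemma one_sub_rpow_add_two_rpow_sub_one_mul_rpow_le {r y : ℝ} (hr : 1 ≤ r) (hy0 : 0 ≤ y)
    (hy : y ≤ 1 / 2) : (1 - y) ^ r + (2 ^ r - 1) * y ^ r ≤ 1 := by
  have hhalf : (1 / 2 : ℝ) ^ r = (2 ^ r)⁻¹ := by rw [one_div, inv_rpow zero_le_two]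
  -- `1 - y` is the convex combination `(1 - 2y) • 1 + 2y • (1/2)`
  have hfar : (1 - y) ^ r ≤ (1 - 2 * y) + 2 * y * (2 ^ r)⁻¹ := by
    have := (convexOn_rpow hr).2 (x := 1) (y := 1 / 2) (by norm_num)
      (by norm_num) (by linarith : 0 ≤ 1 - 2 * y) (by linarith : 0 ≤ 2 * y) (by ring)
    simp only [smul_eq_mul] at this
    rwa [one_rpow, hhalf, mul_one,
      show 1 - 2 * y + 2 * y * (1 / 2) = 1 - y by ring] at this
  have hnear : y ^ r ≤ 2 * y * (2 ^ r)⁻¹ := by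
    calc y ^ r = (2 * y) ^ r * (2 ^ r)⁻¹ := by
          rw [mul_rpow zero_le_two hy0]; field_simp
      _ ≤ 2 * y * (2 ^ r)⁻¹ := by
          gcongr; exact rpow_le_self_of_le_one (by linarith) (by linarith) hr
  have hcancel : (2 ^ r - 1) * (2 * y * (2 ^ r)⁻¹) = 2 * y - 2 * y * (2 ^ r)⁻¹ := by
    field_simp
  nlinarith [one_le_rpow one_le_two (zero_le_one.trans hr)]

lemma add_add_two_rpow_one_div_mul_le_one {s a b u : ℝ} (hs0 : 0 < s) (hs1 : s ≤ 1)
    (ha : 0 ≤ a) (hb : 0 ≤ b) (hu : 0 ≤ u) (h : (a + u) ^ s + (b + u) ^ s ≤ 1) :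
    a + b + 2 ^ (1 / s) * u ≤ 1 := by
  wlog hba : b ≤ a generalizing a b
  · linarith [this hb ha (by linarith) (by linarith)]
  set r := 1 / s
  have hr : 1 ≤ r := one_le_one_div hs0 hs1
  have hsr : s * r = 1 := mul_one_div_cancel hs0.ne'
  have hpow : ∀ x : ℝ, 0 ≤ x → (x ^ s) ^ r = x := fun x hx ↦ by
    rw [← rpow_mul hx, hsr, rpow_one]
  set y := (b + u) ^ s
  have hy0 : 0 ≤ y := by positivity
  have hyx : y ≤ (a + u) ^ s := rpow_le_rpow (by positivity) (by linarith) hs0.le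
  have hA : a + u ≤ (1 - y) ^ r := by
    rw [← hpow (a + u) (by positivity)]
    exact rpow_le_rpow (by positivity) (by linarith) (by linarith)
  have hB : (b + u) = y ^ r := (hpow _ (by positivity)).symm
  have h2r : 2 ≤ (2:ℝ) ^ r := by
    simpa using rpow_le_rpow_of_exponent_le one_le_two hr
  have := one_sub_rpow_add_two_rpow_sub_one_mul_rpow_le hr hy0 (by linarith)
  -- also `u ≤ b + u`, so `(2^r - 2) u ≤ (2^r - 2)(b + u)`
  nlinarith

lemma mem_frontier_of_forall_smul_mem {E : Type*} [NormedAddCommGroup E] [NormedSpace ℝ E]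
    {G : Set E} {w : E} (hw : w ∉ G) (h : ∀ t ∈ Ioo (0:ℝ) 1, t • w ∈ G) :
    w ∈ frontier G := by
  refine ⟨?_, fun hint ↦ hw (interior_subset hint)⟩
  have hlim : Filter.Tendsto (fun t : ℝ ↦ t • w) (𝓝[<] 1) (𝓝 w) := by
    have hcont : Continuous fun t : ℝ ↦ t • w := continuous_id.smul continuous_const
    simpa using (hcont.tendsto 1).mono_left nhdsWithin_le_nhds
  exact mem_closure_of_tendsto hlim
    (Filter.mem_of_superset (Ioo_mem_nhdsLT zero_lt_one) fun t ht ↦ h t ht)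

section Quasihyperbolic

variable {n : ℕ} {G H : Set (EuclideanSpace ℝ (Fin n))}

def qhPaths (G : Set (EuclideanSpace ℝ (Fin n))) (x y : EuclideanSpace ℝ (Fin n)) :
    Set (ℝ → EuclideanSpace ℝ (Fin n)) :=
  {γ | γ 0 = x ∧ γ 1 = y ∧ (∀ t ∈ Icc (0:ℝ) 1, γ t ∈ G) ∧
    ContDiffOn ℝ 1 γ (Icc 0 1)}

lemma qhDist_eq_iInf_qhPaths (G : Set (EuclideanSpace ℝ (Fin n)))
    (x y : EuclideanSpace ℝ (Fin n)) :
    qhDist G x y = ⨅ γ : qhPaths G x y, qhLength G γ :=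
  rfl

lemma qhPaths_nonempty_of_starConvex (hG : StarConvex ℝ 0 G) {x y : EuclideanSpace ℝ (Fin n)}
    (hx : x ∈ G) (hy : y ∈ G) : (qhPaths G x y).Nonempty := by
  refine ⟨fun t ↦ smoothTransition (1 - 2 * t) • x + smoothTransition (2 * t - 1) • y,
    by norm_num, by norm_num, fun t _ ↦ ?_, ?_⟩
  · dsimp only
    rcases le_total t (1 / 2) with ht | ht
    · rw [smoothTransition.zero_of_nonpos (by linarith : 2 * t - 1 ≤ 0), zero_smul, add_zero]
      exact hG.smul_mem hx (smoothTransition.nonneg _) (smoothTransition.le_one _)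
    · rw [smoothTransition.zero_of_nonpos (by linarith : 1 - 2 * t ≤ 0), zero_smul, zero_add]
      exact hG.smul_mem hy (smoothTransition.nonneg _) (smoothTransition.le_one _)
  · refine ContDiff.contDiffOn ?_
    have := smoothTransition.contDiff (n := 1)
    fun_prop

lemma bdist_pos (hG : IsOpen G) (hfr : (frontier G).Nonempty) {x : EuclideanSpace ℝ (Fin n)}
    (hx : x ∈ G) : 0 < bdist G x :=
  (isClosed_frontier.notMem_iff_infDist_pos hfr).1 fun h ↦ (hG.frontier_eq ▸ h).2 hx

lemma qhLength_nonneg (G : Set (EuclideanSpace ℝ (Fin n)))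
    (γ : ℝ → EuclideanSpace ℝ (Fin n)) :
    0 ≤ qhLength G γ :=
  intervalIntegral.integral_nonneg zero_le_one fun _ _ ↦ div_nonneg (norm_nonneg _) infDist_nonneg

lemma qhLength_eq_integral_derivWithin (G : Set (EuclideanSpace ℝ (Fin n)))
    (γ : ℝ → EuclideanSpace ℝ (Fin n)) :
    qhLength G γ = ∫ t in (0:ℝ)..1, ‖derivWithin γ (Icc 0 1) t‖ / bdist G (γ t) := by
  refine intervalIntegral.integral_congr_ae ?_
  filter_upwards [MeasureTheory.compl_mem_ae_iff.2 (volume_singleton (a := (1:ℝ)))] with t ht1 ht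
  rw [uIoc_of_le zero_le_one] at ht
  rw [derivWithin_of_mem_nhds (Icc_mem_nhds ht.1 (lt_of_le_of_ne ht.2 ht1))]

lemma continuousOn_qhLength_integrand {γ : ℝ → EuclideanSpace ℝ (Fin n)}
    (hγ : ContDiffOn ℝ 1 γ (Icc 0 1)) (hpos : ∀ t ∈ Icc (0:ℝ) 1, 0 < bdist G (γ t)) :
    ContinuousOn (fun t ↦ ‖derivWithin γ (Icc 0 1) t‖ / bdist G (γ t)) (Icc 0 1) :=
  (hγ.continuousOn_derivWithin (uniqueDiffOn_Icc zero_lt_one) le_rfl).norm.div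
    ((continuous_infDist_pt _).comp_continuousOn hγ.continuousOn) fun t ht ↦ (hpos t ht).ne'

lemma mul_qhLength_le {c : ℝ} (hc : 0 < c) {γ : ℝ → EuclideanSpace ℝ (Fin n)}
    (hγ : ContDiffOn ℝ 1 γ (Icc 0 1)) (hpos : ∀ t ∈ Icc (0:ℝ) 1, 0 < bdist G (γ t))
    (hle : ∀ t ∈ Icc (0:ℝ) 1, c * bdist G (γ t) ≤ bdist H (γ t)) :
    c * qhLength H γ ≤ qhLength G γ := by
  have hposH : ∀ t ∈ Icc (0:ℝ) 1, 0 < bdist H (γ t) :=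
    fun t ht ↦ (mul_pos hc (hpos t ht)).trans_le (hle t ht)
  rw [qhLength_eq_integral_derivWithin, qhLength_eq_integral_derivWithin,
    ← intervalIntegral.integral_const_mul]
  refine intervalIntegral.integral_mono_on zero_le_one
    ((continuousOn_const.mul (continuousOn_qhLength_integrand hγ hposH)).intervalIntegrable_of_Icc
      zero_le_one)
    ((continuousOn_qhLength_integrand hγ hpos).intervalIntegrable_of_Icc zero_le_one)
    fun t ht ↦ ?_
  have hfrac : c / bdist H (γ t) ≤ 1 / bdist G (γ t) := by
    rw [div_le_div_iff₀ (hposH t ht) (hpos t ht), one_mul]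
    exact hle t ht
  calc c * (‖derivWithin γ (Icc 0 1) t‖ / bdist H (γ t))
      = ‖derivWithin γ (Icc 0 1) t‖ * (c / bdist H (γ t)) := by ring
    _ ≤ ‖derivWithin γ (Icc 0 1) t‖ * (1 / bdist G (γ t)) :=
      mul_le_mul_of_nonneg_left hfrac (norm_nonneg _)
    _ = ‖derivWithin γ (Icc 0 1) t‖ / bdist G (γ t) := mul_one_div _ _

-- `qhDist G x y` is the junk value `0` when no path joins `x` and `y` in `G`
lemma mul_qhDist_le {c : ℝ} (hc : 0 < c) (hGH : G ⊆ H) (hpos : ∀ x ∈ G, 0 < bdist G x)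
    (hle : ∀ x ∈ G, c * bdist G x ≤ bdist H x) {x y : EuclideanSpace ℝ (Fin n)}
    (hxy : (qhPaths G x y).Nonempty) : c * qhDist H x y ≤ qhDist G x y := by
  have := hxy.to_subtype
  rw [qhDist_eq_iInf_qhPaths, qhDist_eq_iInf_qhPaths]
  refine le_ciInf fun γ ↦ ?_
  obtain ⟨γ, h0, h1, hmem, hγ⟩ := γ
  have hbdd : BddBelow (range fun δ : qhPaths H x y ↦ qhLength H δ) :=
    ⟨0, by rintro _ ⟨δ, rfl⟩; exact qhLength_nonneg _ _⟩
  calc c * _ ≤ c * qhLength H γ :=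
        mul_le_mul_of_nonneg_left
          (ciInf_le hbdd ⟨γ, h0, h1, fun t ht ↦ hGH (hmem t ht), hγ⟩) hc.le
    _ ≤ qhLength G γ :=
        mul_qhLength_le hc hγ (fun t ht ↦ hpos _ (hmem t ht)) fun t ht ↦ hle _ (hmem t ht)

end Quasihyperbolic

noncomputable def lpSum (s : ℝ) (p : EuclideanSpace ℝ (Fin 2)) : ℝ := |p 0| ^ s + |p 1| ^ s

def lpUnitBall (s : ℝ) : Set (EuclideanSpace ℝ (Fin 2)) := {p | lpSum s p < 1}

lemma lpUnitBall_one : lpUnitBall 1 = {p : EuclideanSpace ℝ (Fin 2) | |p 0| + |p 1| < 1} := by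
  simp [lpUnitBall, lpSum]

section lpUnitBall

variable {s : ℝ}

lemma lpSum_nonneg (p : EuclideanSpace ℝ (Fin 2)) : 0 ≤ lpSum s p := by
  unfold lpSum; positivity

lemma continuous_lpSum (hs : 0 ≤ s) : Continuous (lpSum s) := by
  unfold lpSum
  fun_prop (disch := exact hs)

lemma lpSum_smul {t : ℝ} (ht : 0 ≤ t) (p : EuclideanSpace ℝ (Fin 2)) :
    lpSum s (t • p) = t ^ s * lpSum s p := by
  simp only [lpSum, PiLp.smul_apply, smul_eq_mul, abs_mul, abs_of_nonneg ht,
    mul_rpow ht (abs_nonneg _)]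
  ring

lemma isOpen_lpUnitBall (hs : 0 ≤ s) : IsOpen (lpUnitBall s) :=
  isOpen_lt (continuous_lpSum hs) continuous_const

lemma starConvex_lpUnitBall (hs : 0 ≤ s) : StarConvex ℝ 0 (lpUnitBall s) := by
  refine starConvex_zero_iff.2 fun p hp t ht0 ht1 ↦ ?_
  change lpSum s (t • p) < 1
  rw [lpSum_smul ht0]
  exact (mul_le_of_le_one_left (lpSum_nonneg p) (rpow_le_one ht0 ht1 hs)).trans_lt hp

lemma lpSum_eq_one_of_mem_frontier (hs : 0 ≤ s) {p : EuclideanSpace ℝ (Fin 2)}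
    (hp : p ∈ frontier (lpUnitBall s)) : lpSum s p = 1 :=
  frontier_lt_subset_eq (continuous_lpSum hs) continuous_const hp

lemma mem_frontier_lpUnitBall (hs : 0 < s) {p : EuclideanSpace ℝ (Fin 2)} (hp : lpSum s p = 1) :
    p ∈ frontier (lpUnitBall s) := by
  refine mem_frontier_of_forall_smul_mem (fun h ↦ (show lpSum s p < 1 from h).ne hp)
    fun t ht ↦ ?_
  change lpSum s (t • p) < 1
  rw [lpSum_smul ht.1.le, hp, mul_one]
  exact rpow_lt_one ht.1.le ht.2 hs

lemma frontier_lpUnitBall_nonempty (hs : 0 < s) : (frontier (lpUnitBall s)).Nonempty :=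
  ⟨!₂[1, 0], mem_frontier_lpUnitBall hs (by simp [lpSum, zero_rpow hs.ne'])⟩

lemma lpUnitBall_subset_lpUnitBall_one (hs0 : 0 < s) (hs1 : s ≤ 1) :
    lpUnitBall s ⊆ lpUnitBall 1 := by
  have hle : ∀ x : ℝ, 0 ≤ x → x ^ s < 1 → x ≤ x ^ s := fun x hx hxs ↦ by
    refine self_le_rpow_of_le_one hx ?_ hs1
    by_contra! h
    exact (one_le_rpow h.le hs0.le).not_gt hxs
  intro p hp
  have h0 : 0 ≤ |p 0| ^ s := by positivity
  have h1 : 0 ≤ |p 1| ^ s := by positivity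
  change |p 0| ^ s + |p 1| ^ s < 1 at hp
  change |p 0| ^ (1:ℝ) + |p 1| ^ (1:ℝ) < 1
  rw [rpow_one, rpow_one]
  linarith [hle (|p 0|) (abs_nonneg _) (by linarith), hle (|p 1|) (abs_nonneg _) (by linarith)]

lemma abs_sub_add_abs_sub_le_sqrt_two_mul_dist (z w : EuclideanSpace ℝ (Fin 2)) :
    |z 0 - w 0| + |z 1 - w 1| ≤ √2 * dist z w := by
  rw [EuclideanSpace.dist_eq, Fin.sum_univ_two, Real.dist_eq, Real.dist_eq,
    ← sqrt_mul zero_le_two]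
  refine le_sqrt_of_sq_le ?_
  nlinarith [sq_nonneg (|z 0 - w 0| - |z 1 - w 1|), sq_abs (z 0 - w 0), sq_abs (z 1 - w 1)]

lemma exists_abs_eq_add_abs_sub_eq (x : ℝ) {u : ℝ} (hu : 0 ≤ u) :
    ∃ y, |y| = |x| + u ∧ |x - y| = u := by
  rcases le_total 0 x with hx | hx
  · exact ⟨x + u, by rw [abs_of_nonneg hx, abs_of_nonneg (by linarith)],
      by simp [abs_of_nonneg hu]⟩
  · exact ⟨x - u, by rw [abs_of_nonpos hx, abs_of_nonpos (by linarith)]; ring,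
      by simp [abs_of_nonneg hu]⟩

lemma bdist_lpUnitBall_le (hs : 0 < s) {z : EuclideanSpace ℝ (Fin 2)} {u : ℝ} (hu : 0 ≤ u)
    (h : (|z 0| + u) ^ s + (|z 1| + u) ^ s = 1) : bdist (lpUnitBall s) z ≤ √2 * u := by
  obtain ⟨y₀, hy₀, hzy₀⟩ := exists_abs_eq_add_abs_sub_eq (z 0) hu
  obtain ⟨y₁, hy₁, hzy₁⟩ := exists_abs_eq_add_abs_sub_eq (z 1) hu
  have hw : !₂[y₀, y₁] ∈ frontier (lpUnitBall s) :=
    mem_frontier_lpUnitBall hs (by simpa [lpSum, hy₀, hy₁] using h)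
  calc bdist (lpUnitBall s) z ≤ dist z !₂[y₀, y₁] := infDist_le_dist_of_mem hw
    _ = √2 * u := by
      rw [EuclideanSpace.dist_eq, Fin.sum_univ_two, Real.dist_eq, Real.dist_eq]
      simp only [Matrix.cons_val_zero, Matrix.cons_val_one, hzy₀, hzy₁]
      rw [← two_mul, sqrt_mul zero_le_two, sqrt_sq hu]

lemma one_sub_div_sqrt_two_le_bdist_lpUnitBall_one (z : EuclideanSpace ℝ (Fin 2)) :
    (1 - (|z 0| + |z 1|)) / √2 ≤ bdist (lpUnitBall 1) z := by
  refine (le_infDist (frontier_lpUnitBall_nonempty one_pos)).2 fun w hw ↦ ?_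
  have hw1 := lpSum_eq_one_of_mem_frontier zero_le_one hw
  simp only [lpSum, rpow_one] at hw1
  rw [div_le_iff₀ (by positivity), mul_comm]
  have := abs_sub_add_abs_sub_le_sqrt_two_mul_dist z w
  linarith [abs_sub_abs_le_abs_sub (w 0) (z 0), abs_sub_abs_le_abs_sub (w 1) (z 1),
    abs_sub_comm (z 0) (w 0), abs_sub_comm (z 1) (w 1)]

lemma exists_add_rpow_add_add_rpow_eq_one (hs : 0 ≤ s) {a b : ℝ} (ha : 0 ≤ a) (hb : 0 ≤ b)
    (h : a ^ s + b ^ s ≤ 1) : ∃ u, 0 ≤ u ∧ (a + u) ^ s + (b + u) ^ s = 1 := by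
  have hcont : ContinuousOn (fun u : ℝ ↦ (a + u) ^ s + (b + u) ^ s) (Icc 0 1) := by
    fun_prop (disch := exact hs)
  have hend : 1 ≤ (a + 1) ^ s + (b + 1) ^ s := by
    linarith [one_le_rpow (by linarith : 1 ≤ a + 1) hs, rpow_nonneg (by linarith : 0 ≤ b + 1) s]
  obtain ⟨u, hu, hueq⟩ := intermediate_value_Icc zero_le_one hcont ⟨by simpa using h, hend⟩
  exact ⟨u, hu.1, hueq⟩

lemma two_rpow_mul_bdist_lpUnitBall_le (hs0 : 0 < s) (hs1 : s ≤ 1)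
    {z : EuclideanSpace ℝ (Fin 2)} (hz : z ∈ lpUnitBall s) :
    2 ^ (1 / s - 1) * bdist (lpUnitBall s) z ≤ bdist (lpUnitBall 1) z := by
  obtain ⟨u, hu, hexit⟩ := exists_add_rpow_add_add_rpow_eq_one hs0.le (abs_nonneg (z 0))
    (abs_nonneg (z 1)) (le_of_lt hz)
  have hlin := add_add_two_rpow_one_div_mul_le_one hs0 hs1 (abs_nonneg (z 0)) (abs_nonneg (z 1))
    hu hexit.le
  calc 2 ^ (1 / s - 1) * bdist (lpUnitBall s) z ≤ 2 ^ (1 / s - 1) * (√2 * u) := by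
        gcongr; exact bdist_lpUnitBall_le hs0 hu hexit
    _ = 2 ^ (1 / s) * u / √2 := by
        rw [rpow_sub zero_lt_two, rpow_one]
        field_simp
        rw [sq_sqrt zero_le_two]
    _ ≤ (1 - (|z 0| + |z 1|)) / √2 := by gcongr; linarith
    _ ≤ bdist (lpUnitBall 1) z := one_sub_div_sqrt_two_le_bdist_lpUnitBall_one z

end lpUnitBall

theorem stmt_14 (s : ℝ) (hs0 : 0 < s) (hs1 : s < 1)
    (z₁ z₂ : EuclideanSpace ℝ (Fin 2))
    (h₁ : z₁ ∈ {p : EuclideanSpace ℝ (Fin 2) | |p 0| ^ s + |p 1| ^ s < 1})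
    (h₂ : z₂ ∈ {p : EuclideanSpace ℝ (Fin 2) | |p 0| ^ s + |p 1| ^ s < 1}) :
    (2 : ℝ) ^ (1 / s - 1) *
        qhDist {p : EuclideanSpace ℝ (Fin 2) | |p 0| + |p 1| < 1} z₁ z₂ ≤
      qhDist {p : EuclideanSpace ℝ (Fin 2) | |p 0| ^ s + |p 1| ^ s < 1} z₁ z₂ := by
  rw [← lpUnitBall_one]
  exact mul_qhDist_le (by positivity) (lpUnitBall_subset_lpUnitBall_one hs0 hs1.le)
    (fun _ ↦ bdist_pos (isOpen_lpUnitBall hs0.le) (frontier_lpUnitBall_nonempty hs0))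
    (fun _ ↦ two_rpow_mul_bdist_lpUnitBall_le hs0 hs1.le)
    (qhPaths_nonempty_of_starConvex (starConvex_lpUnitBall hs0.le) h₁ h₂)
end
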